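/- Let k ∈ ℕ and c ∈ ℝ with c ≠ 0. Let f(t) = −(k+1)/(t^{k+1} + c) (which is real-analytic in a neighborhood of 0 and satisfies f'(t) = t^k·f(t)² there), and let g_m = f^{(m)}(0)/m! be its m-th Taylor coefficient at 0. Define z(n) = Σ_{m=0}^{n} g_m · n!/(n−m)!. Then for every n ∈ ℕ: z(n+1) − z(n) = n! · Σ_{(j_1,j_2) ∈ ℕ², j_1+j_2 ≤ n−k} (−1)^{j_1+j_2+n−k} · z(j_1)·z(j_2) / (j_1! · j_2! · (n−k−j_1−j_2)!), where the right-hand side is the empty sum 0 when n < k. -/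

import Mathlib

/-!
Encode a sequence `z` by its exponential generating function `Z = ∑ zₙ Xⁿ / n!`. The transform
`zₙ = ∑ gₘ n!/(n-m)!` says `Z = G eˣ` with `G = ∑ gₘ Xᵐ`; then `(z (n+1) - z n) / n!` is the `n`-th
coefficient of `Z' - Z = G' eˣ`, while the right-hand side divided by `n!` is the `n`-th coefficient
of `Xᵏ Z² e⁻ˣ = Xᵏ G² eˣ`. So the recurrence holds as soon as `G' = Xᵏ G²`, the formal version of
`f' = tᵏ f²`. For the Taylor series `G` of `f`, the geometric expansion gives
`G (c + X^(k+1)) = -(k+1)`; differentiating and cancelling `c + X^(k+1)` yields `G' = Xᵏ G²`.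
-/

open Finset hiding mk
open PowerSeries
open scoped Nat

theorem neg_one_pow_add_of_le {R : Type*} [Monoid R] [HasDistribNeg R] {a N : ℕ} (h : a ≤ N) :
    (-1 : R) ^ (a + N) = (-1) ^ (N - a) := by
  rw [show a + N = N - a + 2 * a by omega, pow_add, pow_mul, neg_one_sq, one_pow, mul_one]

section ExpGenFun

variable {K : Type*} [Field K]

noncomputable def egf (z : ℕ → K) : K⟦X⟧ := PowerSeries.mk fun n => z n / n !

theorem coeff_egf (z : ℕ → K) (n : ℕ) : coeff n (egf z) = z n / n ! := coeff_mk _ _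

variable [CharZero K]

theorem coeff_exp_eq_inv_factorial (n : ℕ) : coeff n (exp K) = (n ! : K)⁻¹ := by
  simp [coeff_exp]

theorem coeff_evalNegHom_exp (n : ℕ) : coeff n (evalNegHom (exp K)) = (-1) ^ n / n ! := by
  rw [evalNegHom, coeff_rescale, coeff_exp_eq_inv_factorial, div_eq_mul_inv]

theorem coeff_derivative_egf (z : ℕ → K) (n : ℕ) :
    coeff n (d⁄dX K (egf z)) = z (n + 1) / n ! := by
  rw [coeff_derivative, coeff_egf, Nat.factorial_succ]
  push_cast
  field_simp

theorem egf_eq_mk_mul_exp (g z : ℕ → K)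
    (hz : ∀ n, z n = ∑ m ∈ range (n + 1), g m * n.descFactorial m) :
    egf z = mk g * exp K := by
  ext n
  rw [coeff_egf, coeff_mul, Nat.sum_antidiagonal_eq_sum_range_succ_mk, hz, sum_div]
  refine sum_congr rfl fun m hm => ?_
  have hmn : m ≤ n := Nat.lt_succ_iff.mp (mem_range.mp hm)
  have hn : ((n - m)! : K) * n.descFactorial m = n ! := by
    exact_mod_cast Nat.factorial_mul_descFactorial hmn
  have hd : (n.descFactorial m : K) ≠ 0 := by
    exact_mod_cast (Nat.descFactorial_pos.mpr hmn).ne'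
  rw [coeff_mk, coeff_exp_eq_inv_factorial, ← hn]
  field_simp

theorem derivative_egf_sub_egf {k : ℕ} {g : ℕ → K} (hg : d⁄dX K (mk g) = X ^ k * mk g ^ 2)
    {z : ℕ → K} (hz : ∀ n, z n = ∑ m ∈ range (n + 1), g m * n.descFactorial m) :
    d⁄dX K (egf z) - egf z = X ^ k * (egf z ^ 2 * evalNegHom (exp K)) := by
  have hexp : exp K * evalNegHom (exp K) = 1 := exp_mul_exp_neg_eq_one
  rw [egf_eq_mk_mul_exp g z hz, Derivation.leibniz, derivative_exp, hg, smul_eq_mul, smul_eq_mul]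
  linear_combination -(X ^ k * mk g ^ 2 * exp K) * hexp

theorem coeff_X_pow_mul_egf_sq_mul_exp_neg (z : ℕ → K) (k n : ℕ) :
    coeff n (X ^ k * (egf z ^ 2 * evalNegHom (exp K))) =
      ∑ j ∈ (range (n + 1) ×ˢ range (n + 1)).filter (fun j => j.1 + j.2 + k ≤ n),
        (-1 : K) ^ (j.1 + j.2 + (n - k)) * z j.1 * z j.2 /
          ((j.1 ! : K) * (j.2 ! : K) * ((n - k - j.1 - j.2)! : K)) := by
  rw [coeff_X_pow_mul']
  split_ifs with hk
  · rw [coeff_mul, Nat.sum_antidiagonal_eq_sum_range_succ_mk,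
      ← sum_fiberwise_of_maps_to (g := fun j : ℕ × ℕ => j.1 + j.2) (t := range (n - k + 1))
        (fun j hj => by simp only [mem_filter, mem_range] at hj ⊢; omega)]
    refine sum_congr rfl fun a ha => ?_
    have ha : a ≤ n - k := Nat.lt_succ_iff.mp (mem_range.mp ha)
    have hfiber : ((range (n + 1) ×ˢ range (n + 1)).filter (fun j => j.1 + j.2 + k ≤ n)).filter
        (fun j => j.1 + j.2 = a) = antidiagonal a := by
      ext j
      simp only [mem_filter, mem_product, mem_range, HasAntidiagonal.mem_antidiagonal]
      omega
    rw [hfiber, pow_two, coeff_mul, sum_mul, coeff_evalNegHom_exp]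
    refine sum_congr rfl fun j hj => ?_
    rw [HasAntidiagonal.mem_antidiagonal] at hj
    rw [coeff_egf, coeff_egf, hj, neg_one_pow_add_of_le ha,
      show n - k - j.1 - j.2 = n - k - a by omega]
    field_simp
  · refine (sum_eq_zero fun j hj => ?_).symm
    simp only [mem_filter] at hj
    omega

theorem sub_eq_factorial_mul_sum_of_derivative_eq {k : ℕ} {g : ℕ → K}
    (hg : d⁄dX K (mk g) = X ^ k * mk g ^ 2) {z : ℕ → K}
    (hz : ∀ n, z n = ∑ m ∈ range (n + 1), g m * n.descFactorial m) (n : ℕ) :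
    z (n + 1) - z n =
      (n ! : K) * ∑ j ∈ (range (n + 1) ×ˢ range (n + 1)).filter (fun j => j.1 + j.2 + k ≤ n),
        (-1 : K) ^ (j.1 + j.2 + (n - k)) * z j.1 * z j.2 /
          ((j.1 ! : K) * (j.2 ! : K) * ((n - k - j.1 - j.2)! : K)) := by
  have h := congrArg (coeff n) (derivative_egf_sub_egf hg hz)
  rw [map_sub, coeff_derivative_egf, coeff_egf, coeff_X_pow_mul_egf_sq_mul_exp_neg] at h
  have hn : (n ! : K) ≠ 0 := Nat.cast_ne_zero.mpr n.factorial_ne_zero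
  rw [← h]
  field_simp

end ExpGenFun

section RiccatiSeries

variable {K : Type*} [Field K]

noncomputable def riccatiCoeff (k : ℕ) (c : K) (n : ℕ) : K :=
  if k + 1 ∣ n then -(k + 1) / c * (-c⁻¹) ^ (n / (k + 1)) else 0

theorem riccatiCoeff_add (k : ℕ) (c : K) (n : ℕ) :
    riccatiCoeff k c (n + (k + 1)) = -c⁻¹ * riccatiCoeff k c n := by
  simp only [riccatiCoeff, Nat.dvd_add_self_right, Nat.add_div_right n k.succ_pos, pow_succ]
  split_ifs <;> ring

theorem riccatiCoeff_of_lt {k n : ℕ} (c : K) (hn : n < k + 1) :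
    riccatiCoeff k c n = if n = 0 then -(k + 1) / c else 0 := by
  rcases n.eq_zero_or_pos with rfl | hpos
  · simp [riccatiCoeff]
  · simp [riccatiCoeff, Nat.not_dvd_of_pos_of_lt hpos hn, hpos.ne']

theorem mk_riccatiCoeff_mul {c : K} (hc : c ≠ 0) (k : ℕ) :
    mk (riccatiCoeff k c) * (C c + X ^ (k + 1)) = C (-(k + 1) : K) := by
  ext n
  rw [mul_add, map_add, coeff_mul_C, coeff_mul_X_pow', coeff_mk, coeff_C]
  obtain hn | ⟨m, rfl⟩ : n < k + 1 ∨ ∃ m, n = m + (k + 1) :=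
    (lt_or_ge n (k + 1)).imp_right fun h => ⟨n - (k + 1), by omega⟩
  · rw [riccatiCoeff_of_lt c hn, if_neg (show ¬k + 1 ≤ n by omega)]
    split_ifs <;> simp [hc]
  · rw [riccatiCoeff_add, if_pos (show k + 1 ≤ m + (k + 1) by omega),
      if_neg (show m + (k + 1) ≠ 0 by omega), Nat.add_sub_cancel, coeff_mk]
    field_simp
    ring

theorem derivative_mk_riccatiCoeff {c : K} (hc : c ≠ 0) (k : ℕ) :
    d⁄dX K (mk (riccatiCoeff k c)) = X ^ k * mk (riccatiCoeff k c) ^ 2 := by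
  have hG := mk_riccatiCoeff_mul hc k
  have hP : C c + X ^ (k + 1) ≠ (0 : K⟦X⟧) := fun h => hc <| by
    simpa using congrArg constantCoeff h
  have hG' := congrArg (d⁄dX K) hG
  rw [Derivation.leibniz, map_add, derivative_C, derivative_pow, derivative_X, derivative_C,
    smul_eq_mul, smul_eq_mul, Nat.add_sub_cancel, Nat.cast_add_one] at hG'
  simp only [map_neg, map_add, map_natCast, map_one] at hG
  refine mul_right_cancel₀ hP ?_
  linear_combination hG' - X ^ k * mk (riccatiCoeff k c) * hG

end RiccatiSeries

theorem hasSum_riccatiCoeff_mul_pow (k : ℕ) {c t : ℝ} (ht : |t| ^ (k + 1) < |c|) :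
    HasSum (fun n => riccatiCoeff k c n * t ^ n) (-(k + 1) / (t ^ (k + 1) + c)) := by
  have hc : 0 < |c| := (pow_nonneg (abs_nonneg t) _).trans_lt ht
  have hq : |-(t ^ (k + 1) / c)| < 1 := by
    rwa [abs_neg, abs_div, abs_pow, div_lt_one hc]
  have hgeom := (hasSum_geometric_of_abs_lt_one hq).mul_left (-(k + 1) / c)
  rw [sub_neg_eq_add, one_add_div (abs_pos.mp hc), inv_div, add_comm c,
    div_mul_div_cancel₀ (abs_pos.mp hc)] at hgeom
  have hinj : Function.Injective ((k + 1) * ·) := mul_right_injective₀ k.succ_ne_zero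
  rw [← hinj.hasSum_iff]
  · refine hgeom.congr_fun fun j => ?_
    rw [Function.comp_apply, riccatiCoeff, if_pos (dvd_mul_right _ _),
      Nat.mul_div_cancel_left _ (by positivity), pow_mul]
    ring
  · intro n hn
    simp only [riccatiCoeff, ite_mul, zero_mul, ite_eq_right_iff]
    rintro ⟨j, rfl⟩
    exact absurd ⟨j, rfl⟩ hn

theorem abs_riccatiCoeff_mul_pow_le (k : ℕ) (c : ℝ) {r : ℝ} (hr : 0 ≤ r)
    (hrc : r ^ (k + 1) ≤ |c|) (n : ℕ) :
    |riccatiCoeff k c n| * r ^ n ≤ (k + 1) / |c| := by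
  unfold riccatiCoeff
  split_ifs with hn
  · obtain ⟨j, rfl⟩ := hn
    have hq : r ^ (k + 1) / |c| ≤ 1 := div_le_one_of_le₀ hrc (abs_nonneg c)
    calc |-(k + 1) / c * (-c⁻¹) ^ ((k + 1) * j / (k + 1))| * r ^ ((k + 1) * j)
        = (k + 1) / |c| * (r ^ (k + 1) / |c|) ^ j := by
          rw [Nat.mul_div_cancel_left _ k.succ_pos, abs_mul, abs_div, abs_neg, abs_pow, abs_neg,
            abs_inv, div_pow, pow_mul, abs_of_nonneg (by positivity : (0 : ℝ) ≤ k + 1)]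
          ring
      _ ≤ (k + 1) / |c| :=
          mul_le_of_le_one_right (by positivity) (pow_le_one₀ (by positivity) hq)
  · simp only [abs_zero, zero_mul]
    positivity

theorem hasFPowerSeriesOnBall_riccati (k : ℕ) {c : ℝ} (hc : c ≠ 0) :
    HasFPowerSeriesOnBall (fun t : ℝ => -(k + 1) / (t ^ (k + 1) + c))
      (FormalMultilinearSeries.ofScalars ℝ (riccatiCoeff k c)) 0
      (ENNReal.ofReal (min 1 |c|)) := by
  have hρ : 0 ≤ min 1 |c| := le_min zero_le_one (abs_nonneg c)
  have hpow {s : ℝ} (hs0 : 0 ≤ s) (hs : s ≤ min 1 |c|) : s ^ (k + 1) ≤ s :=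
    pow_le_of_le_one hs0 (hs.trans (min_le_left _ _)) k.succ_ne_zero
  refine ⟨?_, ENNReal.ofReal_pos.mpr (lt_min one_pos (abs_pos.mpr hc)), fun {y} hy => ?_⟩
  · rw [ENNReal.ofReal]
    refine FormalMultilinearSeries.le_radius_of_bound _ ((k + 1) / |c|) fun n => ?_
    rw [FormalMultilinearSeries.ofScalars_norm, Real.norm_eq_abs, Real.coe_toNNReal _ hρ]
    exact abs_riccatiCoeff_mul_pow_le k c hρ ((hpow hρ le_rfl).trans (min_le_right _ _)) n
  · rw [Metric.eball_ofReal, Metric.mem_ball, dist_zero_right, Real.norm_eq_abs] at hy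
    have hy' : |y| ^ (k + 1) < |c| :=
      (hpow (abs_nonneg y) hy.le).trans_lt (hy.trans_le (min_le_right _ _))
    simp only [FormalMultilinearSeries.ofScalars_apply_eq, smul_eq_mul, zero_add]
    exact hasSum_riccatiCoeff_mul_pow k hy'

theorem iteratedDeriv_div_factorial_riccati (k : ℕ) {c : ℝ} (hc : c ≠ 0) (n : ℕ) :
    iteratedDeriv n (fun t : ℝ => -(k + 1) / (t ^ (k + 1) + c)) 0 / n ! = riccatiCoeff k c n := by
  have h := (hasFPowerSeriesOnBall_riccati k hc).hasFPowerSeriesAt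
  exact congrFun ((FormalMultilinearSeries.ofScalars_series_eq_iff ℝ _ _).mp
    (h.analyticAt.hasFPowerSeriesAt.eq_formalMultilinearSeries h)) n

/-- A nonlinear example: the interpolating transform of the Taylor coefficients of
f(t) = −(k+1)/(t^{k+1}+c) is an exact solution of the nonlocal recurrence representing
z' = t^k·z² on the integer lattice. -/
theorem discrete_riccati_example (k : ℕ) (c : ℝ) (hc : c ≠ 0)
    (f : ℝ → ℝ) (hf : ∀ t : ℝ, f t = -((k : ℝ) + 1) / (t ^ (k + 1) + c))
    (g : ℕ → ℝ) (hg : ∀ m : ℕ, g m = iteratedDeriv m f 0 / (Nat.factorial m : ℝ))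
    (z : ℕ → ℝ)
    (hz : ∀ n : ℕ, z n = ∑ m ∈ Finset.range (n + 1), g m * (Nat.descFactorial n m : ℝ)) :
    ∀ n : ℕ,
      z (n + 1) - z n =
        (Nat.factorial n : ℝ) *
          ∑ j ∈ (Finset.range (n + 1) ×ˢ Finset.range (n + 1)).filter
              (fun j => j.1 + j.2 + k ≤ n),
            (-1 : ℝ) ^ (j.1 + j.2 + (n - k)) * z j.1 * z j.2 /
              ((Nat.factorial j.1 : ℝ) * (Nat.factorial j.2 : ℝ) *
                (Nat.factorial (n - k - j.1 - j.2) : ℝ)) := by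
  obtain rfl : f = fun t => -((k : ℝ) + 1) / (t ^ (k + 1) + c) := funext hf
  obtain rfl : g = riccatiCoeff k c :=
    funext fun m => (hg m).trans (iteratedDeriv_div_factorial_riccati k hc m)
  exact sub_eq_factorial_mul_sum_of_derivative_eq (derivative_mk_riccatiCoeff hc k) hz
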